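/- Let S be a Boolean inverse semigroup. Then S is a Clifford semigroup (i.e., d(s) = r(s) for every s ∈ S) if and only if S contains no nonzero infinitesimals. -/
import Mathlib

universe u

/-- An inverse semigroup: every element has a unique generalized inverse. -/
class InverseSemigroup (S : Type u) extends Semigroup S, Inv S where
  mul_inv_mul : ∀ s : S, s * s⁻¹ * s = s
  inv_mul_inv : ∀ s : S, s⁻¹ * s * s⁻¹ = s⁻¹
  inv_unique : ∀ s t : S, s * t * s = s → t * s * t = t → t = s⁻¹

/-- `s` and `t` are compatible if `s⁻¹ * t` and `s * t⁻¹` are idempotents. -/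
def Compatible {S : Type u} [InverseSemigroup S] (s t : S) : Prop :=
  IsIdempotentElem (s⁻¹ * t) ∧ IsIdempotentElem (s * t⁻¹)

/-- A Boolean inverse semigroup: an inverse semigroup with zero whose idempotents
form a Boolean algebra under the natural partial order (meet is multiplication,
bottom is `0`, top is `topIdem`, complement is `komp`), with joins of finite
compatible subsets, multiplication distributing over binary compatible joins. -/
class BooleanInverseSemigroup (S : Type u) extends InverseSemigroup S, Zero S, PartialOrder S where
  le_def : ∀ a b : S, a ≤ b ↔ a = b * (a⁻¹ * a)
  zero_mul : ∀ a : S, 0 * a = 0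
  mul_zero : ∀ a : S, a * 0 = 0
  exists_finset_lub : ∀ A : Finset S, (∀ a ∈ A, ∀ b ∈ A, Compatible a b) →
    ∃ s : S, IsLUB (↑A : Set S) s
  vee : S → S → S
  isLUB_vee : ∀ a b : S, Compatible a b → IsLUB {a, b} (vee a b)
  isLUB_mul_vee : ∀ a b c : S, Compatible a b → IsLUB {c * a, c * b} (c * vee a b)
  isLUB_vee_mul : ∀ a b c : S, Compatible a b → IsLUB {a * c, b * c} (vee a b * c)
  topIdem : S
  topIdem_idem : IsIdempotentElem topIdem
  le_topIdem : ∀ e : S, IsIdempotentElem e → e ≤ topIdem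
  komp : S → S
  komp_idem : ∀ e : S, IsIdempotentElem e → IsIdempotentElem (komp e)
  mul_komp : ∀ e : S, IsIdempotentElem e → e * komp e = 0
  isLUB_komp : ∀ e : S, IsIdempotentElem e → IsLUB {e, komp e} topIdem

namespace CliffordAux

section InvSemi
variable {S : Type u} [InverseSemigroup S]

lemma mis (s : S) : s * s⁻¹ * s = s := InverseSemigroup.mul_inv_mul s
lemma imi (s : S) : s⁻¹ * s * s⁻¹ = s⁻¹ := InverseSemigroup.inv_mul_inv s
lemma inv_uniq {s t : S} (h1 : s * t * s = s) (h2 : t * s * t = t) : t = s⁻¹ :=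
  InverseSemigroup.inv_unique s t h1 h2

lemma inv_inv' (s : S) : (s⁻¹)⁻¹ = s := (inv_uniq (imi s) (mis s)).symm

lemma idem_inv {e : S} (he : e * e = e) : e⁻¹ = e :=
  (inv_uniq (by rw [he, he]) (by rw [he, he])).symm

/-- product of idempotents is idempotent -/
lemma idem_mul_idem {e f : S} (he : e * e = e) (hf : f * f = f) :
    e * f * (e * f) = e * f := by
  set x := (e * f)⁻¹ with hx
  have himi : e * f * x * (e * f) = e * f := mis (e * f)
  have himi2' : x * e * f * x = x := by rw [mul_assoc x e f]; exact imi (e * f)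
  have hfxe : f * x * e = x := by
    apply inv_uniq
    · rw [show e * f * (f * x * e) * (e * f) = e * (f * f) * x * (e * e) * f by
        simp only [mul_assoc], hf, he]
      rw [show e * f * x * (e * f) = e * f * x * e * f from by simp only [mul_assoc]] at himi
      exact himi
    · rw [show f * x * e * (e * f) * (f * x * e) = f * (x * (e * e) * (f * f) * x) * e by
        simp only [mul_assoc], he, hf, himi2']
  have hxx : x * x = x := by
    conv_lhs => rw [← hfxe]
    rw [show f * x * e * (f * x * e) = f * (x * e * f * x) * e by simp only [mul_assoc],
      himi2', hfxe]
  have hefx : e * f = x := by rw [← inv_inv' (e * f), ← hx, idem_inv hxx]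
  rw [hefx]; exact hxx

/-- idempotents commute -/
lemma idem_comm {e f : S} (he : e * e = e) (hf : f * f = f) : e * f = f * e := by
  have hef := idem_mul_idem he hf
  have hfe := idem_mul_idem hf he
  have h1 : f * e = (e * f)⁻¹ := by
    apply inv_uniq
    · rw [show e * f * (f * e) * (e * f) = e * (f * f) * (e * e) * f by simp only [mul_assoc],
        hf, he, show e * f * e * f = e * f * (e * f) from by simp only [mul_assoc], hef]
    · rw [show f * e * (e * f) * (f * e) = f * (e * e) * (f * f) * e by simp only [mul_assoc],
        he, hf, show f * e * f * e = f * e * (f * e) from by simp only [mul_assoc], hfe]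
  rw [h1, idem_inv hef]

lemma dd_idem (s : S) : s⁻¹ * s * (s⁻¹ * s) = s⁻¹ * s := by
  rw [show s⁻¹ * s * (s⁻¹ * s) = s⁻¹ * (s * s⁻¹ * s) by simp only [mul_assoc], mis]

lemma rr_idem (s : S) : s * s⁻¹ * (s * s⁻¹) = s * s⁻¹ := by
  rw [show s * s⁻¹ * (s * s⁻¹) = s * (s⁻¹ * s * s⁻¹) by simp only [mul_assoc], imi]

end InvSemi

section Bool
variable {S : Type u} [BooleanInverseSemigroup S]

open BooleanInverseSemigroup

lemma zm (a : S) : 0 * a = 0 := BooleanInverseSemigroup.zero_mul a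
lemma mz (a : S) : a * 0 = 0 := BooleanInverseSemigroup.mul_zero a

lemma inv_zero' : (0 : S)⁻¹ = 0 :=
  (inv_uniq (s := (0 : S)) (t := (0 : S)) (by rw [zm, zm]) (by rw [zm, zm])).symm

lemma bot_le' (a : S) : (0 : S) ≤ a := by
  rw [le_def, inv_zero', zm, mz]

/-- an idempotent absorbs the top idempotent -/
lemma mul_top {e : S} (he : e * e = e) : e * topIdem = e := by
  have h := le_topIdem e he
  rw [le_def, idem_inv he, he] at h
  rw [idem_comm he topIdem_idem, ← h]

/-- complementation: if `f * komp e = 0` for idempotents `e, f`, then `f = f * e`. -/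
lemma absorb_of_komp {e f : S} (he : e * e = e) (hf : f * f = f)
    (h0 : f * komp e = 0) : f = f * e := by
  have hk : komp e * komp e = komp e := komp_idem e he
  have compat : Compatible e (komp e) := by
    constructor
    · show e⁻¹ * komp e * (e⁻¹ * komp e) = e⁻¹ * komp e
      rw [idem_inv he]; exact idem_mul_idem he hk
    · show e * (komp e)⁻¹ * (e * (komp e)⁻¹) = e * (komp e)⁻¹
      rw [idem_inv hk]; exact idem_mul_idem he hk
  have hveetop : vee e (komp e) = topIdem :=
    (isLUB_vee e (komp e) compat).unique (isLUB_komp e he)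
  have h3 : IsLUB {f * e, f * komp e} (f * vee e (komp e)) :=
    isLUB_mul_vee e (komp e) f compat
  rw [hveetop, mul_top hf, h0] at h3
  have h4 : IsLUB ({f * e, (0 : S)} : Set S) (f * e) := by
    constructor
    · rintro x (rfl | rfl)
      · exact le_refl _
      · exact bot_le' _
    · exact fun y hy => hy (Or.inl rfl)
  exact h3.unique h4

/-- key construction: if there are no nonzero infinitesimals and `g` is an
idempotent below `r(s)` orthogonal to `d(s)`, then `g = 0`. -/
lemma key_lemma (hno : ∀ a : S, a * a = 0 → a = 0) (s g : S)
    (hg : g * g = g) (hgf : g * (s * s⁻¹) = g) (heg : s⁻¹ * s * g = 0) : g = 0 := by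
  have hgf' : g * s * s⁻¹ = g := by rw [mul_assoc]; exact hgf
  have hinv : (g * s)⁻¹ = s⁻¹ * g := by
    symm; apply inv_uniq
    · rw [show g * s * (s⁻¹ * g) * (g * s) = g * s * s⁻¹ * (g * g) * s by
        simp only [mul_assoc], hg, hgf', hg]
    · rw [show s⁻¹ * g * (g * s) * (s⁻¹ * g) = s⁻¹ * (g * g) * s * s⁻¹ * g by
        simp only [mul_assoc], hg,
        show s⁻¹ * g * s * s⁻¹ * g = s⁻¹ * (g * s * s⁻¹) * g by simp only [mul_assoc],
        hgf', mul_assoc s⁻¹ g g, hg]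
  have hr : g * s * (s⁻¹ * g) = g := by
    rw [show g * s * (s⁻¹ * g) = g * s * s⁻¹ * g by simp only [mul_assoc], hgf', hg]
  have hmid : (g * s)⁻¹ * (g * s) * (g * s * (g * s)⁻¹) = 0 := by
    rw [hinv, hr,
      show s⁻¹ * g * (g * s) * g = s⁻¹ * (g * g) * s * g by simp only [mul_assoc], hg]
    have hde : s⁻¹ * g * s * (s⁻¹ * s) = s⁻¹ * g * s := by
      rw [show s⁻¹ * g * s * (s⁻¹ * s) = s⁻¹ * g * (s * s⁻¹ * s) by simp only [mul_assoc], mis]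
    calc s⁻¹ * g * s * g = s⁻¹ * g * s * (s⁻¹ * s) * g := by rw [hde]
      _ = s⁻¹ * g * s * (s⁻¹ * s * g) := by simp only [mul_assoc]
      _ = 0 := by rw [heg, mz]
  have ha2 : g * s * (g * s) = 0 := by
    conv_lhs => rw [← mis (g * s)]
    rw [show g * s * (g * s)⁻¹ * (g * s) * (g * s * (g * s)⁻¹ * (g * s)) =
      g * s * ((g * s)⁻¹ * (g * s) * (g * s * (g * s)⁻¹)) * (g * s) by simp only [mul_assoc],
      hmid, mz, zm]
  have ha0 : g * s = 0 := hno _ ha2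
  rw [← hr, ha0, zm]

end Bool
end CliffordAux

open CliffordAux BooleanInverseSemigroup in
/-- Proposition 2.6: a Boolean inverse semigroup is Clifford iff it has no
nonzero infinitesimals. -/
theorem clifford_iff_no_infinitesimals {S : Type u} [BooleanInverseSemigroup S] :
    (∀ s : S, s⁻¹ * s = s * s⁻¹) ↔ (∀ a : S, a * a = 0 → a = 0) := by
  constructor
  · intro hcl a ha2
    calc a = a * (a⁻¹ * a) := by rw [← mul_assoc, mis]
      _ = a * (a * a⁻¹) := by rw [hcl]
      _ = a * a * a⁻¹ := by rw [mul_assoc]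
      _ = 0 := by rw [ha2, zm]
  · intro hno s
    have he : s⁻¹ * s * (s⁻¹ * s) = s⁻¹ * s := dd_idem s
    have hf : s * s⁻¹ * (s * s⁻¹) = s * s⁻¹ := rr_idem s
    have hke : komp (s⁻¹ * s) * komp (s⁻¹ * s) = komp (s⁻¹ * s) := komp_idem _ he
    have hkf : komp (s * s⁻¹) * komp (s * s⁻¹) = komp (s * s⁻¹) := komp_idem _ hf
    -- g1 = r(s) * komp(d(s)) is zero
    have hg1 : s * s⁻¹ * komp (s⁻¹ * s) = 0 := by
      apply key_lemma hno s
      · rw [show s * s⁻¹ * komp (s⁻¹ * s) * (s * s⁻¹ * komp (s⁻¹ * s)) =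
          s * s⁻¹ * (komp (s⁻¹ * s) * (s * s⁻¹)) * komp (s⁻¹ * s) by simp only [mul_assoc],
          ← idem_comm hf hke,
          show s * s⁻¹ * (s * s⁻¹ * komp (s⁻¹ * s)) * komp (s⁻¹ * s) =
          s * s⁻¹ * (s * s⁻¹) * (komp (s⁻¹ * s) * komp (s⁻¹ * s)) by simp only [mul_assoc],
          hf, hke]
      · rw [show s * s⁻¹ * komp (s⁻¹ * s) * (s * s⁻¹) =
          s * s⁻¹ * (komp (s⁻¹ * s) * (s * s⁻¹)) by simp only [mul_assoc],
          ← idem_comm hf hke, ← mul_assoc, hf]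
      · rw [show s⁻¹ * s * (s * s⁻¹ * komp (s⁻¹ * s)) =
          s⁻¹ * s * (s * s⁻¹) * komp (s⁻¹ * s) by simp only [mul_assoc],
          idem_comm he hf,
          show s * s⁻¹ * (s⁻¹ * s) * komp (s⁻¹ * s) =
          s * s⁻¹ * (s⁻¹ * s * komp (s⁻¹ * s)) by simp only [mul_assoc],
          mul_komp _ he, mz]
    -- g2 = d(s) * komp(r(s)) is zero, applying the key lemma to s⁻¹
    have hg2 : s⁻¹ * s * komp (s * s⁻¹) = 0 := by
      have h := key_lemma hno s⁻¹ (s⁻¹ * s * komp (s * s⁻¹)) ?_ ?_ ?_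
      · exact h
      · rw [show s⁻¹ * s * komp (s * s⁻¹) * (s⁻¹ * s * komp (s * s⁻¹)) =
          s⁻¹ * s * (komp (s * s⁻¹) * (s⁻¹ * s)) * komp (s * s⁻¹) by simp only [mul_assoc],
          ← idem_comm he hkf,
          show s⁻¹ * s * (s⁻¹ * s * komp (s * s⁻¹)) * komp (s * s⁻¹) =
          s⁻¹ * s * (s⁻¹ * s) * (komp (s * s⁻¹) * komp (s * s⁻¹)) by simp only [mul_assoc],
          he, hkf]
      · rw [inv_inv',
          show s⁻¹ * s * komp (s * s⁻¹) * (s⁻¹ * s) =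
          s⁻¹ * s * (komp (s * s⁻¹) * (s⁻¹ * s)) by simp only [mul_assoc],
          ← idem_comm he hkf, ← mul_assoc, he]
      · rw [inv_inv',
          show s * s⁻¹ * (s⁻¹ * s * komp (s * s⁻¹)) =
          s * s⁻¹ * (s⁻¹ * s) * komp (s * s⁻¹) by simp only [mul_assoc],
          idem_comm hf he,
          show s⁻¹ * s * (s * s⁻¹) * komp (s * s⁻¹) =
          s⁻¹ * s * (s * s⁻¹ * komp (s * s⁻¹)) by simp only [mul_assoc],
          mul_komp _ hf, mz]
    have h1 : s * s⁻¹ = s * s⁻¹ * (s⁻¹ * s) := absorb_of_komp he hf hg1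
    have h2 : s⁻¹ * s = s⁻¹ * s * (s * s⁻¹) := absorb_of_komp hf he hg2
    rw [h2, idem_comm he hf, ← h1]
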